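/- For all i, j, k ∈ {1, …, l+1}, the limit of μ·Υ_{ijk}(μ) as μ → 0 with μ ≠ 0 exists; it equals 1/(2(l−2)) when i = j = k = l+1, and it equals 0 otherwise. Consequently the residue of Υ_{ijk} at μ = 0 is δ_{i,l+1}·δ_{j,l+1}·δ_{k,l+1}/(2(l−2)). -/

import Mathlib

open Complex Filter Topology

/-- The factor `-κ_m/(μ-κ_m) + κ_m⁻¹/(μ-κ_m⁻¹)` for an index `m ≤ l`, and `1`
for the index `m = l+1`. -/
noncomputable def upsFactor (l : ℕ) (κ : ℕ → ℂ) (m : ℕ) (μ : ℂ) : ℂ :=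
  if m ≤ l then -κ m / (μ - κ m) + (κ m)⁻¹ / (μ - (κ m)⁻¹) else 1

/-- The denominator
`D(μ) = ∑_{r=1}^l (1/(μ-κ_r) + 1/(μ-κ_r⁻¹)) - (l-2)/μ - 4μ/(μ²-1)`. -/
noncomputable def upsD (l : ℕ) (κ : ℕ → ℂ) (μ : ℂ) : ℂ :=
  (∑ r ∈ Finset.Icc 1 l, (1 / (μ - κ r) + 1 / (μ - (κ r)⁻¹)))
    - ((l : ℂ) - 2) / μ - 4 * μ / (μ ^ 2 - 1)

/-- The integrand `Υ_{ijk}(μ) = -N_{ijk}(μ) / (2 μ² D(μ))` computing the residue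
contributions to the dual Landau–Ginzburg product of the `D_l` relativistic
Toda spectral curve. -/
noncomputable def Ups (l : ℕ) (κ : ℕ → ℂ) (i j k : ℕ) (μ : ℂ) : ℂ :=
  -(upsFactor l κ i μ * upsFactor l κ j μ * upsFactor l κ k μ)
    / (2 * μ ^ 2 * upsD l κ μ)

/-! `μ Υ_{ijk}(μ) = -N_{ijk}(μ) / (2 μ D(μ))`, where both `N_{ijk}` and `μ D(μ)` are
holomorphic at `0`. Each factor of `N_{ijk}` with `m ≤ l` vanishes at `0` (the two terms give
`1` and `-1`), the factor for `m = l+1` is `1`, and `μ D(μ) → -(l-2) ≠ 0` because only the term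
`-(l-2)/μ` of `D` has a pole at `0`. -/

lemma continuousAt_zero_div_sub {c : ℂ} (hc : c ≠ 0) (a : ℂ) :
    ContinuousAt (fun μ : ℂ => a / (μ - c)) 0 :=
  .div continuousAt_const (by fun_prop) (by simpa using hc)

lemma tendsto_upsFactor_zero (l : ℕ) (κ : ℕ → ℂ) (m : ℕ) :
    Tendsto (upsFactor l κ m) (𝓝 0) (𝓝 (if m ≤ l then 0 else 1)) := by
  unfold upsFactor
  split_ifs with hm
  · by_cases hκ : κ m = 0
    · simp [hκ] -- `(κ m)⁻¹ = 0` too, so the factor is identically `0`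
    have hcont : ContinuousAt (fun μ : ℂ => -κ m / (μ - κ m) + (κ m)⁻¹ / (μ - (κ m)⁻¹)) 0 :=
      (continuousAt_zero_div_sub hκ _).add (continuousAt_zero_div_sub (inv_ne_zero hκ) _)
    convert hcont.tendsto using 2
    field_simp
    ring
  · exact tendsto_const_nhds

lemma mul_upsD_eq (l : ℕ) (κ : ℕ → ℂ) {μ : ℂ} (hμ : μ ≠ 0) :
    μ * upsD l κ μ = μ * (∑ r ∈ Finset.Icc 1 l, (1 / (μ - κ r) + 1 / (μ - (κ r)⁻¹)))
      - ((l : ℂ) - 2) - 4 * μ ^ 2 / (μ ^ 2 - 1) := by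
  rw [upsD, mul_sub, mul_sub, mul_div_cancel₀ _ hμ]
  ring

lemma tendsto_mul_upsD_zero (l : ℕ) (κ : ℕ → ℂ) (hκ : ∀ r ∈ Finset.Icc 1 l, κ r ≠ 0) :
    Tendsto (fun μ => μ * upsD l κ μ) (𝓝[≠] 0) (𝓝 (-((l : ℂ) - 2))) := by
  have hsum : ContinuousAt
      (fun μ : ℂ => ∑ r ∈ Finset.Icc 1 l, (1 / (μ - κ r) + 1 / (μ - (κ r)⁻¹))) 0 :=
    tendsto_finsetSum _ fun r hr => ContinuousAt.tendsto <|
      (continuousAt_zero_div_sub (hκ r hr) _).add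
        (continuousAt_zero_div_sub (inv_ne_zero (hκ r hr)) _)
  have hcont : ContinuousAt (fun μ : ℂ => μ * (∑ r ∈ Finset.Icc 1 l,
      (1 / (μ - κ r) + 1 / (μ - (κ r)⁻¹))) - ((l : ℂ) - 2) - 4 * μ ^ 2 / (μ ^ 2 - 1)) 0 :=
    ((continuousAt_id.mul hsum).sub continuousAt_const).sub
      (.div (by fun_prop) (by fun_prop) (by norm_num))
  refine .congr' ?_ <| by
    convert hcont.tendsto.mono_left (nhdsWithin_le_nhds (s := {0}ᶜ)) using 2
    simp
  filter_upwards [self_mem_nhdsWithin] with μ hμ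
  exact (mul_upsD_eq l κ hμ).symm

lemma mul_Ups_eq (l : ℕ) (κ : ℕ → ℂ) (i j k : ℕ) (μ : ℂ) :
    μ * Ups l κ i j k μ = -(upsFactor l κ i μ * upsFactor l κ j μ * upsFactor l κ k μ)
      / (2 * (μ * upsD l κ μ)) := by
  rcases eq_or_ne μ 0 with rfl | hμ
  · simp
  rw [Ups, mul_div_assoc', show 2 * μ ^ 2 * upsD l κ μ = μ * (2 * (μ * upsD l κ μ)) by ring,
    mul_div_mul_left _ _ hμ]

theorem stmt3_general (l : ℕ) (hl : 3 ≤ l) (κ : ℕ → ℂ)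
    (hκ : ∀ r ∈ Finset.Icc 1 l, κ r ≠ 0 ∧ κ r ≠ 1 ∧ κ r ≠ -1)
    (i j k : ℕ) (hi : i ∈ Finset.Icc 1 (l + 1)) (hj : j ∈ Finset.Icc 1 (l + 1))
    (hk : k ∈ Finset.Icc 1 (l + 1)) :
    Tendsto (fun μ : ℂ => μ * Ups l κ i j k μ) (𝓝[≠] 0)
      (𝓝 (if i = l + 1 ∧ j = l + 1 ∧ k = l + 1
            then 1 / (2 * ((l : ℂ) - 2)) else 0)) := by
  have hl2 : (l : ℂ) - 2 ≠ 0 := by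
    rw [sub_ne_zero]
    exact_mod_cast (by omega : l ≠ 2)
  have hF : ∀ m ∈ Finset.Icc 1 (l + 1),
      Tendsto (upsFactor l κ m) (𝓝[≠] 0) (𝓝 (if m = l + 1 then 1 else 0)) := by
    intro m hm
    have hle : m ≤ l ↔ m ≠ l + 1 := by grind
    simpa [hle, ite_not] using (tendsto_upsFactor_zero l κ m).mono_left nhdsWithin_le_nhds
  have hlim := (((hF i hi).mul (hF j hj)).mul (hF k hk)).neg.div
    ((tendsto_mul_upsD_zero l κ fun r hr => (hκ r hr).1).const_mul 2)
    (mul_ne_zero two_ne_zero (neg_ne_zero.mpr hl2))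
  convert hlim.congr fun μ => (mul_Ups_eq l κ i j k μ).symm using 2
  simp only [ite_zero_mul_ite_zero, mul_one, and_assoc]
  split_ifs
  · field_simp
  · simp

/-- For all `i, j, k ∈ {1, …, l+1}`, the limit of
`μ · Υ_{ijk}(μ)` as `μ → 0`, `μ ≠ 0`, exists; it equals `1/(2(l-2))` when
`i = j = k = l+1` and `0` otherwise.  Consequently the residue of `Υ_{ijk}`
at `μ = 0` is `δ_{i,l+1} δ_{j,l+1} δ_{k,l+1} / (2(l-2))`. -/
theorem stmt3 (l : ℕ) (hl : 3 ≤ l) (κ : ℕ → ℂ)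
    (hκ : ∀ r ∈ Finset.Icc 1 l, κ r ≠ 0 ∧ κ r ≠ 1 ∧ κ r ≠ -1)
    (hκ' : ∀ r ∈ Finset.Icc 1 l, ∀ s ∈ Finset.Icc 1 l, r ≠ s →
      κ r ≠ κ s ∧ κ r * κ s ≠ 1)
    (i j k : ℕ) (hi : i ∈ Finset.Icc 1 (l + 1)) (hj : j ∈ Finset.Icc 1 (l + 1))
    (hk : k ∈ Finset.Icc 1 (l + 1)) :
    Tendsto (fun μ : ℂ => μ * Ups l κ i j k μ) (𝓝[≠] 0)
      (𝓝 (if i = l + 1 ∧ j = l + 1 ∧ k = l + 1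
            then 1 / (2 * ((l : ℂ) - 2)) else 0)) :=
  stmt3_general l hl κ hκ i j k hi hj hk
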